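/- arXiv:1412.2047 — 5 statements merged into one kernel-verified Lean document; each statement's English description precedes it below -/
import Mathlib

section
/- Let (X,𝔅,μ) be a σ-finite measure space and {F_t} a measurable flow on it. Suppose there exists a measurable set A ⊆ X of positive measure such that for all δ > 0, limsup_{s→∞} μ(Λ_{F,δ,s}(A)) = 0, where Λ_{F,δ,s}(A) = {x ∈ A : ∃ t with e^{s-δ} < |t| < e^{s+δ} and F_t(x) ∈ A}. If μ' is a σ-finite measure equivalent to μ, then there exists a measurable set B ⊆ X with μ'(B) > 0 such that for all δ > 0, limsup_{s→∞} μ'(Λ_{F,δ,s}(B)) = 0. -/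
open MeasureTheory Filter Set
open scoped ENNReal

/-- The return set `Λ_{F,δ,s}(A)` of a flow `F`. -/
def lamSet {X : Type*} (F : ℝ → X → X) (A : Set X) (δ s : ℝ) : Set X :=
  {x | x ∈ A ∧ ∃ t : ℝ, Real.exp (s - δ) < |t| ∧ |t| < Real.exp (s + δ) ∧ F t x ∈ A}

/-!
Property B is a smallness condition on the return sets of `A`, and these shrink with `A`.
Cutting `A` down to a set `B` on which `dμ'/dμ ≤ n` keeps `μ' B > 0` (the density is finite
a.e. and `μ'(A) > 0`), and on subsets of `B` we have `μ' ≤ n • μ`, so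
`limsup μ'(Λ(B)) ≤ n · limsup μ(Λ(A)) = 0`.
-/

lemma lamSet_subset {X : Type*} (F : ℝ → X → X) (A : Set X) (δ s : ℝ) :
    lamSet F A δ s ⊆ A := fun _ hx => hx.1

lemma lamSet_mono {X : Type*} (F : ℝ → X → X) {A B : Set X} (h : B ⊆ A) (δ s : ℝ) :
    lamSet F B δ s ⊆ lamSet F A δ s := by
  rintro x ⟨hxB, t, h1, h2, h3⟩
  exact ⟨h hxB, t, h1, h2, h h3⟩

namespace MeasureTheory.Measure

variable {X : Type*} [MeasurableSpace X] {μ ν : Measure X}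

lemma restrict_le_smul_of_rnDeriv_le [ν.HaveLebesgueDecomposition μ] (hνμ : ν ≪ μ)
    {B : Set X} (hB : MeasurableSet B) {c : ℝ≥0∞} (hc : ∀ x ∈ B, ν.rnDeriv μ x ≤ c) :
    ν.restrict B ≤ c • μ := by
  refine Measure.le_iff.2 fun s hs => ?_
  rw [restrict_apply hs, ← withDensity_rnDeriv_eq ν μ hνμ, withDensity_apply _ (hs.inter hB),
    smul_apply, smul_eq_mul]
  calc ∫⁻ x in s ∩ B, ν.rnDeriv μ x ∂μ ≤ ∫⁻ _ in s ∩ B, c ∂μ :=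
        setLIntegral_mono measurable_const fun x hx => hc x hx.2
    _ = c * μ (s ∩ B) := by rw [setLIntegral_const, mul_comm]
    _ ≤ c * μ s := by gcongr; exact inter_subset_left

lemma exists_pos_measure_inter_rnDeriv_le [SigmaFinite ν] (hνμ : ν ≪ μ) {A : Set X}
    (hA : 0 < ν A) : ∃ n : ℕ, 0 < ν (A ∩ {x | ν.rnDeriv μ x ≤ n}) := by
  have hcover : A ≤ᵐ[ν] ⋃ n : ℕ, A ∩ {x | ν.rnDeriv μ x ≤ n} := by
    filter_upwards [hνμ.ae_le (ν.rnDeriv_lt_top μ)] with x hx hxA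
    obtain ⟨n, hn⟩ := ENNReal.exists_nat_gt hx.ne
    exact mem_iUnion.2 ⟨n, hxA, hn.le⟩
  by_contra! h
  simp only [nonpos_iff_eq_zero] at h
  exact hA.ne' (measure_mono_null_ae hcover (measure_iUnion_null h))

lemma exists_subset_pos_measure_le_const_mul [SigmaFinite ν] [SigmaFinite μ] (hνμ : ν ≪ μ)
    {A : Set X} (hAm : MeasurableSet A) (hA : 0 < ν A) :
    ∃ B ⊆ A, MeasurableSet B ∧ 0 < ν B ∧
      ∃ c : ℝ≥0∞, c ≠ ∞ ∧ ∀ S ⊆ B, ν S ≤ c * μ S := by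
  obtain ⟨n, hn⟩ := exists_pos_measure_inter_rnDeriv_le hνμ hA
  have hBm : MeasurableSet (A ∩ {x | ν.rnDeriv μ x ≤ n}) :=
    hAm.inter (ν.measurable_rnDeriv μ measurableSet_Iic)
  refine ⟨_, inter_subset_left, hBm, hn, n, ENNReal.natCast_ne_top n, fun S hS => ?_⟩
  calc ν S = ν.restrict (A ∩ {x | ν.rnDeriv μ x ≤ n}) S := (restrict_eq_self ν hS).symm
    _ ≤ ((n : ℝ≥0∞) • μ) S := restrict_le_smul_of_rnDeriv_le hνμ hBm (fun _ hx => hx.2) S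
    _ = n * μ S := rfl

end MeasureTheory.Measure

lemma ENNReal.limsup_eq_zero_of_le_const_mul {α : Type*} {l : Filter α} {f g : α → ℝ≥0∞}
    {c : ℝ≥0∞} (hc : c ≠ ∞) (hfg : ∀ᶠ a in l, f a ≤ c * g a) (hg : limsup g l = 0) :
    limsup f l = 0 :=
  le_antisymm (calc
    limsup f l ≤ limsup (fun a => c * g a) l := limsup_le_limsup hfg
    _ = c * limsup g l := ENNReal.limsup_const_mul_of_ne_top hc
    _ = 0 := by rw [hg, mul_zero]) bot_le

theorem stmt_0_general {X : Type*} [MeasurableSpace X] (μ μ' : Measure X)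
    [SigmaFinite μ] [SigmaFinite μ']
    (F : ℝ → X → X)
    (A : Set X) (hAm : MeasurableSet A) (hApos : 0 < μ A)
    (hA : ∀ δ : ℝ, 0 < δ → limsup (fun s : ℝ => μ (lamSet F A δ s)) atTop = 0)
    (h1 : μ' ≪ μ) (h2 : μ ≪ μ') :
    ∃ B : Set X, MeasurableSet B ∧ 0 < μ' B ∧
      ∀ δ : ℝ, 0 < δ → limsup (fun s : ℝ => μ' (lamSet F B δ s)) atTop = 0 := by
  obtain ⟨B, hBA, hBm, hBpos, c, hc, hμ'B⟩ :=
    Measure.exists_subset_pos_measure_le_const_mul h1 hAm (h2.pos_mono hApos)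
  refine ⟨B, hBm, hBpos, fun δ hδ => ENNReal.limsup_eq_zero_of_le_const_mul hc ?_ (hA δ hδ)⟩
  refine Eventually.of_forall fun s => (hμ'B _ (lamSet_subset F B δ s)).trans ?_
  gcongr
  exact lamSet_mono F hBA δ s

theorem stmt_0 {X : Type*} [MeasurableSpace X] (μ μ' : Measure X)
    [SigmaFinite μ] [SigmaFinite μ']
    (F : ℝ → X → X)
    (hFmeas : Measurable (fun p : ℝ × X => F p.1 p.2))
    (hF0 : ∀ x, F 0 x = x)
    (hFadd : ∀ s t : ℝ, ∀ x, F (s + t) x = F s (F t x))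
    (hFns : ∀ t : ℝ, Measure.QuasiMeasurePreserving (F t) μ μ)
    (A : Set X) (hAm : MeasurableSet A) (hApos : 0 < μ A)
    (hA : ∀ δ : ℝ, 0 < δ → limsup (fun s : ℝ => μ (lamSet F A δ s)) atTop = 0)
    (h1 : μ' ≪ μ) (h2 : μ ≪ μ') :
    ∃ B : Set X, MeasurableSet B ∧ 0 < μ' B ∧
      ∀ δ : ℝ, 0 < δ → limsup (fun s : ℝ => μ' (lamSet F B δ s)) atTop = 0 :=
  stmt_0_general μ μ' F A hAm hApos hA h1 h2
end

section
/- Let ℛ be an ergodic hyperfinite equivalence relation of type III₀ on (X,𝔅,μ) with μ lacunary, δ its Radon–Nikodym cocycle, and let {F_t} be the associated flow of ℛ realized as the flow built under the ceiling function ξ(z) = min{log δ(x',x) : (x',x) ∈ ℛ, log δ(x',x) > 0} with base automorphism T on the space X₀ of ergodic components of the sub-relation 𝒮 = {(x,y) ∈ ℛ : δ(x,y) = 1}, with quotient map π : X → X₀. Then for any (x,x') ∈ ℛ, writing z = π(x), z' = π(x'), one has F_{log δ(x',x)}(z,0) = (z',0). -/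
/-!
If `c x' x > 0`, the least positive value `ξ (π x)` of the cocycle at `x` is attained at some
`x₁` with `π x₁ = T (π x)`. By the cocycle identity the flow for time `c x' x` from `(π x, 0)`
is one jump under the ceiling, to `(π x₁, 0)`, followed by the flow for the time
`c x' x₁ = c x' x - ξ (π x)`, which is still nonnegative by minimality of `ξ`. Lacunarity gives
`ξ > ε`, so this descent reaches time `0`, where `π x = π x'` because `{c = 0}` is collapsed by
`π`. Negative times follow from the group property of the flow.
-/

theorem forall_mem_of_descent {α : Type*} {s : Set α} {P : α → Prop} (f : α → ℝ) {ε : ℝ}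
    (hε : 0 < ε) (base : ∀ a ∈ s, f a ≤ 0 → P a)
    (step : ∀ a ∈ s, 0 < f a → ∃ b ∈ s, f b ≤ f a - ε ∧ (P b → P a)) :
    ∀ a ∈ s, P a := by
  suffices h : ∀ n : ℕ, ∀ a ∈ s, f a ≤ n * ε → P a by
    intro a ha
    obtain ⟨n, hn⟩ := exists_nat_ge (f a / ε)
    exact h n a ha ((div_le_iff₀ hε).mp hn)
  intro n
  induction n with
  | zero => exact fun a ha hfa => base a ha (by simpa using hfa)
  | succ n ih =>
    intro a ha hfa
    rcases le_or_gt (f a) 0 with hneg | hpos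
    · exact base a ha hneg
    · obtain ⟨b, hb, hfb, hPb⟩ := step a ha hpos
      exact hPb (ih b hb (by push_cast at hfa; linarith))

theorem flow_neg_apply {α : Type*} {F : ℝ → α → α} (hF0 : ∀ y, F 0 y = y)
    (hFadd : ∀ s t : ℝ, ∀ y, F (s + t) y = F s (F t y)) {t : ℝ} {p q : α} (h : F t p = q) :
    F (-t) q = p := by
  rw [← h, ← hFadd, neg_add_cancel, hF0]

section Cocycle

variable {X X₀ : Type*} {Rel : X → X → Prop} {c : X → X → ℝ}

theorem cocycle_self_eq_zero (hRel : Equivalence Rel)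
    (hcocycle : ∀ x y z, Rel x y → Rel y z → c x z = c x y + c y z) (x : X) : c x x = 0 := by
  have := hcocycle x x x (hRel.refl x) (hRel.refl x)
  linarith

theorem cocycle_swap (hRel : Equivalence Rel)
    (hcocycle : ∀ x y z, Rel x y → Rel y z → c x z = c x y + c y z) {x y : X} (h : Rel x y) :
    c y x = -c x y := by
  have := hcocycle x y x h (hRel.symm h)
  rw [cocycle_self_eq_zero hRel hcocycle] at this
  linarith

theorem lt_ceiling_of_lacunary {ε : ℝ} (hlac : ∀ x y, Rel x y → c x y = 0 ∨ ε < |c x y|) {π : X → X₀}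
    {ξ : X₀ → ℝ} (hξ : ∀ x : X, IsLeast {r : ℝ | 0 < r ∧ ∃ x', Rel x' x ∧ c x' x = r} (ξ (π x)))
    (x : X) : ε < ξ (π x) := by
  obtain ⟨hξpos, x₁, hx₁, hcx₁⟩ := (hξ x).1
  rcases hlac x₁ x hx₁ with hzero | hgap
  · linarith
  · rwa [hcx₁, abs_of_pos hξpos] at hgap

theorem flow_cocycle_of_nonneg (hRel : Equivalence Rel)
    (hcocycle : ∀ x y z, Rel x y → Rel y z → c x z = c x y + c y z)
    {ε : ℝ} (hε : 0 < ε) (hlac : ∀ x y, Rel x y → c x y = 0 ∨ ε < |c x y|)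
    {π : X → X₀} (hπ : ∀ x y, Rel x y → c x y = 0 → π x = π y) {ξ : X₀ → ℝ}
    (hξ : ∀ x : X, IsLeast {r : ℝ | 0 < r ∧ ∃ x', Rel x' x ∧ c x' x = r} (ξ (π x)))
    {T : X₀ → X₀} (hT : ∀ x x', Rel x' x → c x' x = ξ (π x) → π x' = T (π x))
    {F : ℝ → X₀ × ℝ → X₀ × ℝ} (hF0 : ∀ y, F 0 y = y)
    (hFadd : ∀ s t : ℝ, ∀ y, F (s + t) y = F s (F t y))
    (hjump : ∀ z : X₀, F (ξ z) (z, 0) = (T z, 0)) (x' : X) :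
    ∀ x ∈ {x | Rel x' x ∧ 0 ≤ c x' x}, F (c x' x) (π x, (0 : ℝ)) = (π x', 0) := by
  refine forall_mem_of_descent (c x') hε ?_ ?_
  · rintro x ⟨hx, hnonneg⟩ hnonpos
    have hzero : c x' x = 0 := le_antisymm hnonpos hnonneg
    rw [hzero, hF0, hπ x' x hx hzero]
  · rintro x ⟨hx, -⟩ hpos
    obtain ⟨⟨-, x₁, hx₁, hcx₁⟩, hleast⟩ := hξ x
    have hrel : Rel x' x₁ := hRel.trans hx (hRel.symm hx₁)
    have hsplit : c x' x = c x' x₁ + ξ (π x) := hcx₁ ▸ hcocycle x' x₁ x hrel hx₁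
    have hξle : ξ (π x) ≤ c x' x := hleast ⟨hpos, x', hx, rfl⟩
    refine ⟨x₁, ⟨hrel, by linarith⟩, by linarith [lt_ceiling_of_lacunary hlac hξ x], fun h => ?_⟩
    rw [hsplit, hFadd, hjump, ← hT x x₁ hx₁ hcx₁, h]

end Cocycle

theorem stmt_5_general {X X₀ : Type*}
    (Rel : X → X → Prop) (hRel : Equivalence Rel)
    (c : X → X → ℝ)
    (hcocycle : ∀ x y z, Rel x y → Rel y z → c x z = c x y + c y z)
    (hlac : ∃ ε : ℝ, 0 < ε ∧ ∀ x y, Rel x y → c x y = 0 ∨ ε < |c x y|)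
    (π : X → X₀)
    (hπ : ∀ x y, Rel x y → c x y = 0 → π x = π y)
    (ξ : X₀ → ℝ)
    (hξ : ∀ x : X, IsLeast {r : ℝ | 0 < r ∧ ∃ x', Rel x' x ∧ c x' x = r} (ξ (π x)))
    (T : X₀ → X₀)
    (hT : ∀ x x', Rel x' x → c x' x = ξ (π x) → π x' = T (π x))
    (F : ℝ → X₀ × ℝ → X₀ × ℝ)
    (hF0 : ∀ y, F 0 y = y)
    (hFadd : ∀ s t : ℝ, ∀ y, F (s + t) y = F s (F t y))
    (hjump : ∀ z : X₀, F (ξ z) (z, 0) = (T z, 0)) :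
    ∀ x x' : X, Rel x' x → F (c x' x) (π x, (0 : ℝ)) = (π x', 0) := by
  obtain ⟨ε, hε, hlac⟩ := hlac
  have hnonneg := flow_cocycle_of_nonneg hRel hcocycle hε hlac hπ hξ hT hF0 hFadd hjump
  intro x x' h
  rcases le_or_gt 0 (c x' x) with hpos | hneg
  · exact hnonneg x' x ⟨h, hpos⟩
  · have hswap : c x x' = -c x' x := cocycle_swap hRel hcocycle h
    have hback := hnonneg x x' ⟨hRel.symm h, by linarith⟩
    simpa [hswap] using flow_neg_apply hF0 hFadd hback

/-- For an ergodic equivalence relation `Rel` with (logarithmic) Radon–Nikodym cocycle `c`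
(with respect to a lacunary measure), the associated flow `F` built under the ceiling
function `ξ` with base automorphism `T` on the space `X₀` of ergodic components of the
sub-relation `{δ = 1}` (with quotient map `π`) satisfies
`F_{log δ(x',x)}(π x, 0) = (π x', 0)` for every `(x, x') ∈ Rel`. -/
theorem stmt_5 {X X₀ : Type*}
    (Rel : X → X → Prop) (hRel : Equivalence Rel)
    (c : X → X → ℝ)
    (hcocycle : ∀ x y z, Rel x y → Rel y z → c x z = c x y + c y z)
    (hlac : ∃ ε : ℝ, 0 < ε ∧ ∀ x y, Rel x y → c x y = 0 ∨ ε < |c x y|)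
    (π : X → X₀)
    (hπ : ∀ x y, Rel x y → c x y = 0 → π x = π y)
    (hπsur : Function.Surjective π)
    (ξ : X₀ → ℝ)
    (hξ : ∀ x : X, IsLeast {r : ℝ | 0 < r ∧ ∃ x', Rel x' x ∧ c x' x = r} (ξ (π x)))
    (T : X₀ → X₀)
    (hT : ∀ x x', Rel x' x → c x' x = ξ (π x) → π x' = T (π x))
    (F : ℝ → X₀ × ℝ → X₀ × ℝ)
    (hF0 : ∀ y, F 0 y = y)
    (hFadd : ∀ s t : ℝ, ∀ y, F (s + t) y = F s (F t y))
    (hjump : ∀ z : X₀, F (ξ z) (z, 0) = (T z, 0)) :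
    ∀ x x' : X, Rel x' x → F (c x' x) (π x, (0 : ℝ)) = (π x', 0) :=
  stmt_5_general Rel hRel c hcocycle hlac π hπ ξ hξ T hT F hF0 hFadd hjump
end

section
/- Let T be a nonsingular automorphism of (X,𝔅,μ). If there exists a positive-measure set A ⊆ X such that for every δ > 0, limsup_{s→∞} μ({x ∈ A : ∃ n ∈ ℤ with e^{s-δ} < |n| < e^{s+δ} and T^n x ∈ A}) = 0, then the flow built under the constant function 1 with base automorphism T has Property B. -/
/-
A point `(x, s)` with `s ∈ [0, 1/2)` returns to `A × [0, 1/2)` at time `t` only through the base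
return `T^n x ∈ A` with `n = ⌊t + s⌋`, and then `|t - n| < 1`. For large `s` the unit error is
absorbed by widening the window `(e^{s-δ}, e^{s+δ})` to `(e^{s-2δ}, e^{s+2δ})`, so the flow return
sets of `A × [0, 1/2)` are dominated by the base return sets of `A` for `2δ`, whose limsup vanishes.
-/

open MeasureTheory Filter Set
open scoped ENNReal

/-- Property B of a flow `F` on a measure space `(X, μ)`. -/
def PropertyB {X : Type*} [MeasurableSpace X] (μ : Measure X) (F : ℝ → X → X) : Prop :=
  ∃ A : Set X, MeasurableSet A ∧ 0 < μ A ∧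
    ∀ δ : ℝ, 0 < δ → limsup (fun s : ℝ => μ (lamSet F A δ s)) atTop = 0

/-- The flow built under the constant function `1` with base automorphism `T`,
on `X × [0,1)`: `F_t(x,s) = (T^⌊t+s⌋ x, {t+s})`. -/
noncomputable def constFlow {X : Type*} (T : Equiv.Perm X) (t : ℝ) (p : X × ℝ) : X × ℝ :=
  ((T ^ ⌊t + p.2⌋) p.1, Int.fract (t + p.2))

def baseReturnSet {X : Type*} (T : Equiv.Perm X) (A : Set X) (δ s : ℝ) : Set X :=
  {x | x ∈ A ∧ ∃ n : ℤ,
    Real.exp (s - δ) < |(n : ℝ)| ∧ |(n : ℝ)| < Real.exp (s + δ) ∧ (T ^ n) x ∈ A}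

lemma eventually_exp_sub_add_one_le {δ : ℝ} (hδ : 0 < δ) :
    ∀ᶠ s in atTop, Real.exp (s - δ) + 1 ≤ Real.exp s := by
  have hgap : Tendsto (fun s => Real.exp (s - δ) * (Real.exp δ - 1)) atTop atTop :=
    (Real.tendsto_exp_atTop.comp (tendsto_atTop_add_const_right _ _ tendsto_id)).atTop_mul_const
      (by linarith [Real.add_one_lt_exp hδ.ne'])
  filter_upwards [hgap.eventually_ge_atTop 1] with s hs
  have hsplit : Real.exp s = Real.exp (s - δ) * Real.exp δ := by rw [← Real.exp_add]; ring_nf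
  nlinarith

lemma abs_sub_floor_lt_one {t s : ℝ} (hs : s ∈ Ico (0 : ℝ) (1 / 2))
    (hfract : Int.fract (t + s) ∈ Ico (0 : ℝ) (1 / 2)) : |t - ⌊t + s⌋| < 1 := by
  have heq : t - ⌊t + s⌋ = Int.fract (t + s) - s := by rw [Int.fract]; ring
  rw [heq, abs_lt]
  constructor <;> linarith [hs.1, hs.2, hfract.1, hfract.2]

lemma lamSet_constFlow_subset {X : Type*} (T : Equiv.Perm X) (A : Set X) {δ δ' σ : ℝ}
    (hlow : Real.exp (σ - δ') + 1 ≤ Real.exp (σ - δ))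
    (hhigh : Real.exp (σ + δ) + 1 ≤ Real.exp (σ + δ')) :
    lamSet (constFlow T) (A ×ˢ Ico (0 : ℝ) (1 / 2)) δ σ ⊆
      baseReturnSet T A δ' σ ×ˢ Ico (0 : ℝ) (1 / 2) := by
  rintro ⟨x, s⟩ ⟨⟨hx, hs⟩, t, ht_low, ht_high, hreturn, hfract⟩
  have hclose := abs_sub_floor_lt_one hs hfract
  have h₁ : |t| ≤ |(⌊t + s⌋ : ℝ)| + |t - ⌊t + s⌋| := by
    simpa using abs_add_le (⌊t + s⌋ : ℝ) (t - ⌊t + s⌋)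
  have h₂ : |(⌊t + s⌋ : ℝ)| ≤ |t| + |t - ⌊t + s⌋| := by
    simpa [abs_sub_comm] using abs_add_le t ((⌊t + s⌋ : ℝ) - t)
  exact ⟨⟨hx, ⌊t + s⌋, by linarith, by linarith, hreturn⟩, hs⟩

lemma prod_volume_prod_le {X : Type*} [MeasurableSpace X] (μ : Measure X) (B : Set X)
    {I : Set ℝ} (hI : volume I ≤ 1) : μ.prod volume (B ×ˢ I) ≤ μ B := by
  rw [Measure.prod_prod]
  simpa using mul_le_mul_right hI (μ B)

theorem stmt_7_general {X : Type*} [MeasurableSpace X] (μ : Measure X)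
    (T : Equiv.Perm X)
    (A : Set X) (hAm : MeasurableSet A) (hApos : 0 < μ A)
    (hA : ∀ δ : ℝ, 0 < δ →
      limsup (fun s : ℝ => μ {x | x ∈ A ∧ ∃ n : ℤ,
        Real.exp (s - δ) < |(n : ℝ)| ∧ |(n : ℝ)| < Real.exp (s + δ) ∧ (T ^ n) x ∈ A})
        atTop = 0) :
    PropertyB ((μ.prod volume).restrict (Set.univ ×ˢ Set.Ico (0 : ℝ) 1))
      (constFlow T) := by
  set ν := (μ.prod volume).restrict (univ ×ˢ Ico (0 : ℝ) 1)
  have hhalf : volume (Ico (0 : ℝ) (1 / 2)) = ENNReal.ofReal (1 / 2) := by simp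
  refine ⟨A ×ˢ Ico 0 (1 / 2), hAm.prod measurableSet_Ico, ?_, fun δ hδ => ?_⟩
  · rw [Measure.restrict_apply (hAm.prod measurableSet_Ico),
      inter_eq_left.mpr (prod_mono (subset_univ A) (Ico_subset_Ico_right (by norm_num))),
      Measure.prod_prod, hhalf]
    exact ENNReal.mul_pos hApos.ne' (by norm_num)
  have hshift (c : ℝ) : Tendsto (· + c) atTop atTop := tendsto_atTop_add_const_right _ c tendsto_id
  have hdom : (fun σ => ν (lamSet (constFlow T) (A ×ˢ Ico 0 (1 / 2)) δ σ)) ≤ᶠ[atTop]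
      fun σ => μ (baseReturnSet T A (2 * δ) σ) := by
    filter_upwards [(hshift (-δ)).eventually (eventually_exp_sub_add_one_le hδ),
      (hshift (2 * δ)).eventually (eventually_exp_sub_add_one_le hδ)] with σ hlow hhigh
    calc ν (lamSet (constFlow T) (A ×ˢ Ico 0 (1 / 2)) δ σ)
        ≤ μ.prod volume (baseReturnSet T A (2 * δ) σ ×ˢ Ico 0 (1 / 2)) :=
          Measure.restrict_le_self _ |>.trans' <| measure_mono <|
            lamSet_constFlow_subset T A (by ring_nf at hlow ⊢; linarith)
              (by ring_nf at hhigh ⊢; linarith)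
      _ ≤ μ (baseReturnSet T A (2 * δ) σ) :=
          prod_volume_prod_le μ _ (by rw [hhalf]; exact ENNReal.ofReal_le_one.mpr (by norm_num))
  exact le_antisymm ((limsup_le_limsup hdom).trans (hA (2 * δ) (by linarith)).le) bot_le

theorem stmt_7 {X : Type*} [MeasurableSpace X] (μ : Measure X) [SigmaFinite μ]
    (T : Equiv.Perm X) (hTmeas : Measurable T) (hTmeas' : Measurable T.symm)
    (hTns : Measure.QuasiMeasurePreserving T μ μ)
    (hTns' : Measure.QuasiMeasurePreserving T.symm μ μ)
    (A : Set X) (hAm : MeasurableSet A) (hApos : 0 < μ A)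
    (hA : ∀ δ : ℝ, 0 < δ →
      limsup (fun s : ℝ => μ {x | x ∈ A ∧ ∃ n : ℤ,
        Real.exp (s - δ) < |(n : ℝ)| ∧ |(n : ℝ)| < Real.exp (s + δ) ∧ (T ^ n) x ∈ A})
        atTop = 0) :
    PropertyB ((μ.prod volume).restrict (Set.univ ×ˢ Set.Ico (0 : ℝ) 1))
      (constFlow T) :=
  stmt_7_general μ T A hAm hApos hA
end

section
/- Let z_n = 2^n − 1 for n ≥ 1, X = ∏_{n≥1} {0,1,…,z_n} with product measure μ = ⊗ μ_n where μ_n(i) = 2^{−n} for each i ∈ {0,…,z_n}, and let T be the odometer on X: (Tx)_n = 0 if n < N(x), x_n + 1 if n = N(x), x_n if n > N(x), where N(x) = min{n ≥ 1 : x_n < z_n}. Then T is nonsingular and ergodic with respect to μ. -/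
open MeasureTheory Filter Set
open scoped ENNReal Classical

/-- The product space `X = ∏_{n≥1} {0,1,…,2^n−1}` (coordinate `n : ℕ` here corresponds
to the paper's coordinate `n+1`, with `2^(n+1)` values). -/
abbrev OdoSpace : Type := (n : ℕ) → Fin (2 ^ (n + 1))

/-- `N(x) - 1`: the (0-based) index of the first coordinate of `x` that is not maximal
(junk value `0` if all coordinates are maximal). -/
noncomputable def Nfind (x : OdoSpace) : ℕ :=
  if h : ∃ n, (x n : ℕ) < 2 ^ (n + 1) - 1 then Nat.find h else 0

/-- The odometer ("add 1 with carry") on `OdoSpace`. -/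
noncomputable def odometer (x : OdoSpace) : OdoSpace :=
  if h : ∃ n, (x n : ℕ) < 2 ^ (n + 1) - 1 then
    fun n =>
      if n < Nat.find h then 0
      else if hn : n = Nat.find h then
        ⟨(x n : ℕ) + 1, by
          have h1 := Nat.find_spec h
          rw [← hn] at h1
          have h2 : 1 ≤ 2 ^ (n + 1) := Nat.one_le_two_pow
          omega⟩
      else x n
  else x

/-- The inverse odometer ("subtract 1 with borrow") on `OdoSpace`. -/
noncomputable def odometerInv (x : OdoSpace) : OdoSpace :=
  if h : ∃ n, 0 < (x n : ℕ) then
    fun n =>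
      if n < Nat.find h then
        ⟨2 ^ (n + 1) - 1, by
          have h2 : 1 ≤ 2 ^ (n + 1) := Nat.one_le_two_pow
          omega⟩
      else if n = Nat.find h then
        ⟨(x n : ℕ) - 1, lt_of_le_of_lt (Nat.sub_le _ _) (x n).isLt⟩
      else x n
  else x

/-- `K_n = 1!·2!⋯n!`. -/
def Kfac (n : ℕ) : ℕ := ∏ i ∈ Finset.Icc 1 n, Nat.factorial i

/-- The ceiling function `f(x) = K_{2^{N+1}+x_{N+1}}` (in the paper's 1-based indexing),
where `N = N(x)`. -/
noncomputable def ff (x : OdoSpace) : ℕ :=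
  Kfac (2 ^ (Nfind x + 2) + (x (Nfind x + 1) : ℕ))

/-!
Read the first `k` digits of `x` as a mixed-radix number `prefixValue k x : Fin (2 ^ 1 ⋯ 2 ^ k)`.
Off the all-maximal point `top`, which is `μ`-null, the odometer acts on it as `+ 1`. The level
sets of these codes are the cylinders: all cylinders of length `k` have the same measure and
`+ 1` permutes them cyclically, so the odometer preserves `μ`. For an invariant set `s` the same
cyclic symmetry makes `μ (s ∩ C)` independent of the cylinder `C` of a given length, which forces
`μ (s ∩ C) = μ s * μ C`; as the cylinders generate, `s` is independent of itself, so `μ s ∈ {0, 1}`.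
-/

open ProbabilityTheory MeasurableSpace

open Fin.NatCast in
theorem Fin.apply_eq_apply_zero_of_apply_add_one {n : ℕ} [NeZero n] {β : Type*} {f : Fin n → β}
    (hf : ∀ i, f (i + 1) = f i) (i : Fin n) : f i = f 0 := by
  suffices h : ∀ j : ℕ, f j = f 0 by simpa using h i
  intro j
  induction j with
  | zero => simp
  | succ j ih => rw [Nat.cast_succ, hf, ih]

theorem Fin.val_add_one_eq_ite {n : ℕ} [NeZero n] (i : Fin n) :
    ((i + 1 : Fin n) : ℕ) = if (i : ℕ) = n - 1 then 0 else (i : ℕ) + 1 := by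
  obtain ⟨n, rfl⟩ := Nat.exists_eq_succ_of_ne_zero (NeZero.ne n)
  simp [Fin.val_add_one, Fin.ext_iff]

section

variable {α : Type*} [MeasurableSpace α] {μ : Measure α}

theorem measure_preimage_singleton_inter_eq_mul [IsProbabilityMeasure μ] {β : Type*} [Fintype β]
    [MeasurableSpace β] [MeasurableSingletonClass β] {c : α → β} (hc : Measurable c) {s : Set α}
    (hs : ∀ b b', μ (c ⁻¹' {b} ∩ s) = μ (c ⁻¹' {b'} ∩ s))
    (huniv : ∀ b b', μ (c ⁻¹' {b}) = μ (c ⁻¹' {b'})) (b : β) :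
    μ (c ⁻¹' {b} ∩ s) = μ (c ⁻¹' {b}) * μ s := by
  have hsum (t : Set α) : ∑ b', μ (c ⁻¹' {b'} ∩ t) = μ t := by
    simpa [Measure.restrict_apply (hc (measurableSet_singleton _))] using
      sum_measure_preimage_singleton (μ := μ.restrict t) Finset.univ
        (fun b _ => hc (measurableSet_singleton b))
  have hs' : μ s = Fintype.card β * μ (c ⁻¹' {b} ∩ s) := by
    rw [← hsum s]
    simp [hs _ b]
  have hu' : 1 = Fintype.card β * μ (c ⁻¹' {b}) := by
    rw [← measure_univ (μ := μ), ← hsum univ]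
    simp [huniv _ b]
  calc μ (c ⁻¹' {b} ∩ s) = μ (c ⁻¹' {b} ∩ s) * (Fintype.card β * μ (c ⁻¹' {b})) := by
        rw [← hu', mul_one]
    _ = μ (c ⁻¹' {b}) * μ s := by rw [hs']; ring

variable {T : α → α} {n : ℕ} [NeZero n] {c : α → Fin n}

theorem preimage_preimage_singleton_ae_eq (hc : ∀ᵐ x ∂μ, c (T x) = c x + 1) (m : Fin n) :
    T ⁻¹' (c ⁻¹' {m}) =ᵐ[μ] c ⁻¹' {m - 1} := by
  filter_upwards [hc] with x hx
  change (c (T x) = m) = (c x = m - 1)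
  rw [hx, eq_sub_iff_add_eq]

theorem measure_preimage_singleton_inter_eq_of_preimage_eq (hT : MeasurePreserving T μ μ)
    (hcm : Measurable c) (hc : ∀ᵐ x ∂μ, c (T x) = c x + 1) {s : Set α} (hs : MeasurableSet s)
    (hTs : T ⁻¹' s = s) (m : Fin n) : μ (c ⁻¹' {m} ∩ s) = μ (c ⁻¹' {0} ∩ s) := by
  refine Fin.apply_eq_apply_zero_of_apply_add_one (f := fun m => μ (c ⁻¹' {m} ∩ s)) (fun m => ?_) m
  calc μ (c ⁻¹' {m + 1} ∩ s) = μ (T ⁻¹' (c ⁻¹' {m + 1} ∩ s)) :=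
        (hT.measure_preimage ((hcm (measurableSet_singleton _)).inter hs).nullMeasurableSet).symm
    _ = μ (c ⁻¹' {m} ∩ s) := by
        rw [preimage_inter, hTs]
        simpa using measure_congr ((preimage_preimage_singleton_ae_eq hc (m + 1)).inter
          (EventuallyEq.refl _ s))

end

def levelSets {α : Type*} {N : ℕ → ℕ} (c : ∀ k, α → Fin (N k)) : Set (Set α) :=
  {t | ∃ k m, c k ⁻¹' {m} = t}

section

variable {α : Type*} [MeasurableSpace α] {μ : Measure α} [IsProbabilityMeasure μ] {T : α → α}
  {N : ℕ → ℕ} [∀ k, NeZero (N k)] {c : ∀ k, α → Fin (N k)}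

theorem measurePreserving_of_levelSets (hT : Measurable T)
    (hgen : ‹MeasurableSpace α› = generateFrom (levelSets c)) (hpi : IsPiSystem (levelSets c))
    (hc : ∀ k, ∀ᵐ x ∂μ, c k (T x) = c k x + 1)
    (hequi : ∀ k m, μ (c k ⁻¹' {m}) = μ (c k ⁻¹' {0})) : MeasurePreserving T μ μ := by
  have := Measure.isProbabilityMeasure_map (μ := μ) hT.aemeasurable
  refine ⟨hT, ext_of_generate_finite _ hgen hpi ?_ (by simp)⟩
  rintro _ ⟨k, m, rfl⟩
  rw [Measure.map_apply hT (hgen ▸ measurableSet_generateFrom ⟨k, m, rfl⟩),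
    measure_congr (preimage_preimage_singleton_ae_eq (hc k) m), hequi, hequi k m]

theorem preErgodic_of_levelSets (hT : MeasurePreserving T μ μ) (hcm : ∀ k, Measurable (c k))
    (hgen : ‹MeasurableSpace α› = generateFrom (levelSets c)) (hpi : IsPiSystem (levelSets c))
    (hc : ∀ k, ∀ᵐ x ∂μ, c k (T x) = c k x + 1) : PreErgodic T μ := by
  refine ⟨fun s hs hTs => ?_⟩
  have hindep : IndepSets {s} (levelSets c) μ := by
    rw [IndepSets_iff]
    rintro _ _ rfl ⟨k, m, rfl⟩
    have hconst {t : Set α} (ht : MeasurableSet t) (hTt : T ⁻¹' t = t) (b b' : Fin (N k)) :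
        μ (c k ⁻¹' {b} ∩ t) = μ (c k ⁻¹' {b'} ∩ t) := by
      rw [measure_preimage_singleton_inter_eq_of_preimage_eq hT (hcm k) (hc k) ht hTt,
        measure_preimage_singleton_inter_eq_of_preimage_eq hT (hcm k) (hc k) ht hTt b']
    rw [inter_comm, measure_preimage_singleton_inter_eq_mul (hcm k) (hconst hs hTs)
      (by simpa using hconst .univ rfl), mul_comm]
  have hss : IndepSet s s μ := by
    have hmeas : ∀ t ∈ levelSets c, MeasurableSet t := by
      rintro _ ⟨k, m, rfl⟩
      exact hcm k (measurableSet_singleton m)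
    have h := hindep.indep' (by simpa using hs) hmeas (.singleton s) hpi
    rw [← hgen] at h
    exact indep_of_indep_of_le_right h (generateFrom_le (by simpa using hs))
  rw [eventuallyConst_set']
  rcases measure_eq_zero_or_one_of_indepSet_self hss with h | h
  · exact .inl (ae_eq_empty.mpr h)
  · exact .inr (ae_eq_univ.mpr ((prob_compl_eq_zero_iff hs).mpr h))

end

namespace Odometer

def top : OdoSpace := fun n => ⟨2 ^ (n + 1) - 1, Nat.sub_lt (by positivity) one_pos⟩

theorem val_top (n : ℕ) : (top n : ℕ) = 2 ^ (n + 1) - 1 := rfl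

theorem eq_top_iff_not_lt {n : ℕ} (v : Fin (2 ^ (n + 1))) :
    v = top n ↔ ¬ (v : ℕ) < 2 ^ (n + 1) - 1 := by
  rw [Fin.ext_iff, val_top]
  have := v.isLt
  omega

theorem ne_top_iff {x : OdoSpace} : x ≠ top ↔ ∃ n, (x n : ℕ) < 2 ^ (n + 1) - 1 := by
  simp only [Ne, funext_iff, eq_top_iff_not_lt, not_forall, not_not]

theorem odometer_top : odometer top = top :=
  dif_neg fun h => ne_top_iff.mpr h rfl

theorem top_add_one (n : ℕ) : top n + 1 = 0 := by
  ext
  rw [Fin.val_add_one_eq_ite, if_pos (val_top n)]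
  rfl

theorem odometer_apply_of_ne_top {x : OdoSpace} (hx : x ≠ top) (n : ℕ) :
    odometer x n = if ∀ i < n, x i = top i then x n + 1 else x n := by
  have h := ne_top_iff.mp hx
  have hcarry : (∀ i < n, x i = top i) ↔ n ≤ Nat.find h := by
    simp only [Nat.le_find_iff, eq_top_iff_not_lt]
  rw [odometer, dif_pos h, if_congr hcarry rfl rfl]
  rcases lt_trichotomy n (Nat.find h) with hn | rfl | hn
  · rw [if_pos hn, if_pos hn.le, (eq_top_iff_not_lt _).mpr (Nat.find_min h hn), top_add_one]
  · have hmax := Nat.find_spec h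
    simp only [lt_irrefl, if_false, dif_pos, le_refl, if_true]
    ext
    rw [Fin.val_add_one_eq_ite, if_neg (by omega)]
  · simp [hn.not_gt, hn.ne', hn.not_ge]

theorem measurable_odometer : Measurable odometer := by
  have h : odometer = fun x n => if x ≠ top ∧ ∀ i < n, x i = top i then x n + 1 else x n := by
    funext x n
    by_cases hx : x = top
    · simp [hx, odometer_top]
    · simp [hx, odometer_apply_of_ne_top hx]
  rw [h]
  refine measurable_pi_lambda _ fun n => Measurable.ite ?_ ?_ (measurable_pi_apply n)
  · simp only [ofPred_and, ofPred_forall]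
    exact (measurableSet_singleton top).compl.inter
      (.iInter fun i => .iInter fun _ => measurable_pi_apply i (measurableSet_singleton _))
  · exact (Measurable.of_discrete (f := fun v : Fin _ => v + 1)).comp (measurable_pi_apply n)

abbrev numPrefixes (k : ℕ) : ℕ := ∏ i : Fin k, 2 ^ ((i : ℕ) + 1)

instance (k : ℕ) : NeZero (numPrefixes k) :=
  ⟨Finset.prod_ne_zero_iff.mpr fun _ _ => by positivity⟩

theorem numPrefixes_succ (k : ℕ) : numPrefixes (k + 1) = numPrefixes k * 2 ^ (k + 1) := by
  simp [numPrefixes, Fin.prod_univ_castSucc]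

def prefixValue (k : ℕ) (x : OdoSpace) : Fin (numPrefixes k) :=
  finPiFinEquiv fun i : Fin k => x i

theorem val_prefixValue_zero (x : OdoSpace) : (prefixValue 0 x : ℕ) = 0 := by
  simp [prefixValue, finPiFinEquiv_apply]

theorem val_prefixValue_succ (k : ℕ) (x : OdoSpace) :
    (prefixValue (k + 1) x : ℕ) = prefixValue k x + x k * numPrefixes k := by
  simp [prefixValue, finPiFinEquiv_apply, Fin.sum_univ_castSucc]

-- The `if` term is the carry out of the first `k` digits.
theorem val_prefixValue_odometer_add {x : OdoSpace} (hx : x ≠ top) (k : ℕ) :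
    (prefixValue k (odometer x) : ℕ) + (if ∀ i < k, x i = top i then numPrefixes k else 0) =
      prefixValue k x + 1 := by
  induction k with
  | zero => simp [val_prefixValue_zero]
  | succ k ih =>
    rw [val_prefixValue_succ, val_prefixValue_succ, numPrefixes_succ,
      odometer_apply_of_ne_top hx]
    have hcarry : (∀ i < k + 1, x i = top i) ↔ (∀ i < k, x i = top i) ∧ x k = top k :=
      Nat.forall_lt_succ_right
    by_cases hk : ∀ i < k, x i = top i
    · rw [if_pos hk] at ih ⊢
      by_cases hxk : x k = top k
      · rw [if_pos (hcarry.mpr ⟨hk, hxk⟩), hxk, top_add_one, val_top, Fin.val_zero]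
        obtain ⟨p, hp⟩ : ∃ p, 2 ^ (k + 1) = p + 1 :=
          ⟨_, (Nat.sub_add_cancel Nat.one_le_two_pow).symm⟩
        rw [hp, Nat.add_sub_cancel]
        linear_combination ih
      · rw [if_neg fun h => hxk (hcarry.mp h).2, Fin.val_add_one_eq_ite,
          if_neg (by rw [eq_top_iff_not_lt, not_not] at hxk; omega)]
        nlinarith
    · rw [if_neg hk] at ih
      rw [if_neg hk, if_neg fun h => hk (hcarry.mp h).1]
      omega

theorem prefixValue_odometer {x : OdoSpace} (hx : x ≠ top) (k : ℕ) :
    prefixValue k (odometer x) = prefixValue k x + 1 := by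
  have h := val_prefixValue_odometer_add hx k
  have hlt := (prefixValue k (odometer x)).isLt
  ext
  rw [Fin.val_add_one_eq_ite]
  split_ifs at h ⊢ <;> omega

theorem prefixValue_eq_iff {k : ℕ} {x y : OdoSpace} :
    prefixValue k y = prefixValue k x ↔ ∀ i < k, y i = x i := by
  simp [prefixValue, funext_iff, Fin.forall_iff]

theorem preimage_prefixValue_singleton (k : ℕ) (m : Fin (numPrefixes k)) :
    prefixValue k ⁻¹' {m} = {x | ∀ n : Fin k, x n = finPiFinEquiv.symm m n} := by
  ext x
  simp [prefixValue, ← Equiv.eq_symm_apply, funext_iff]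

theorem measurable_prefixValue (k : ℕ) : Measurable (prefixValue k) :=
  Measurable.of_discrete.comp (measurable_pi_lambda _ fun i => measurable_pi_apply (i : ℕ))

theorem isPiSystem_levelSets_prefixValue : IsPiSystem (levelSets prefixValue) := by
  rintro _ ⟨k, m, rfl⟩ _ ⟨k', m', rfl⟩ ⟨x, hx, hx'⟩
  refine ⟨max k k', prefixValue (max k k') x, ?_⟩
  ext y
  simp only [mem_inter_iff, mem_preimage, mem_singleton_iff] at hx hx' ⊢
  rw [← hx, ← hx', prefixValue_eq_iff, prefixValue_eq_iff, prefixValue_eq_iff]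
  simp only [lt_max_iff, or_imp, forall_and]

theorem generateFrom_levelSets_prefixValue :
    (MeasurableSpace.pi : MeasurableSpace OdoSpace) = generateFrom (levelSets prefixValue) := by
  refine le_antisymm (iSup_le fun n => Measurable.comap_le ?_) (generateFrom_le ?_)
  · have h : Measurable[generateFrom (levelSets prefixValue)] (prefixValue (n + 1)) :=
      @measurable_to_countable' _ _ _ _ (generateFrom _) _
        fun m => measurableSet_generateFrom ⟨n + 1, m, rfl⟩
    have hcoord : (fun x : OdoSpace => x n) =
        (fun m => finPiFinEquiv.symm m ⟨n, n.lt_add_one⟩) ∘ prefixValue (n + 1) := by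
      funext x
      simp [prefixValue]
    rw [hcoord]
    exact Measurable.of_discrete.comp h
  · rintro _ ⟨k, m, rfl⟩
    exact measurable_prefixValue k (measurableSet_singleton m)

theorem prod_inv_two_pow_le (k : ℕ) :
    ∏ n : Fin k, ((2 : ℝ≥0∞) ^ ((n : ℕ) + 1))⁻¹ ≤ 2⁻¹ ^ k :=
  calc ∏ n : Fin k, ((2 : ℝ≥0∞) ^ ((n : ℕ) + 1))⁻¹ ≤ ∏ _n : Fin k, (2 : ℝ≥0∞)⁻¹ :=
        Finset.prod_le_prod' fun n _ =>
          ENNReal.inv_le_inv.mpr (le_self_pow₀ one_le_two (Nat.succ_ne_zero _))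
    _ = 2⁻¹ ^ k := by simp

theorem measure_singleton_top {μ : Measure OdoSpace}
    (hμ : ∀ k m, μ (prefixValue k ⁻¹' {m}) = ∏ n : Fin k, ((2 : ℝ≥0∞) ^ ((n : ℕ) + 1))⁻¹) :
    μ {top} = 0 := by
  have hle (k : ℕ) : μ {top} ≤ 2⁻¹ ^ k :=
    calc μ {top} ≤ μ (prefixValue k ⁻¹' {prefixValue k top}) :=
          measure_mono (singleton_subset_iff.mpr rfl)
      _ ≤ 2⁻¹ ^ k := (hμ k _).trans_le (prod_inv_two_pow_le k)
  exact nonpos_iff_eq_zero.mp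
    (ge_of_tendsto' (ENNReal.tendsto_pow_atTop_nhds_zero_of_lt_one (by norm_num)) hle)

end Odometer

open Odometer

theorem stmt_8 (μ : Measure OdoSpace) [IsProbabilityMeasure μ]
    (hμ : ∀ (k : ℕ) (a : (n : Fin k) → Fin (2 ^ ((n : ℕ) + 1))),
      μ {x : OdoSpace | ∀ n : Fin k, x (n : ℕ) = a n} =
        ∏ n : Fin k, ((2 : ℝ≥0∞) ^ ((n : ℕ) + 1))⁻¹) :
    Measure.QuasiMeasurePreserving odometer μ μ ∧ PreErgodic odometer μ := by
  have hcyl (k : ℕ) (m : Fin (numPrefixes k)) :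
      μ (prefixValue k ⁻¹' {m}) = ∏ n : Fin k, ((2 : ℝ≥0∞) ^ ((n : ℕ) + 1))⁻¹ := by
    rw [preimage_prefixValue_singleton]
    exact hμ k _
  have hodo (k : ℕ) : ∀ᵐ x ∂μ, prefixValue k (odometer x) = prefixValue k x + 1 := by
    filter_upwards [measure_eq_zero_iff_ae_notMem.mp (measure_singleton_top hcyl)] with x hx
    exact prefixValue_odometer hx k
  have hT : MeasurePreserving odometer μ μ :=
    measurePreserving_of_levelSets measurable_odometer generateFrom_levelSets_prefixValue
      isPiSystem_levelSets_prefixValue hodo fun k m => by rw [hcyl, hcyl]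
  exact ⟨hT.quasiMeasurePreserving, preErgodic_of_levelSets hT measurable_prefixValue
    generateFrom_levelSets_prefixValue isPiSystem_levelSets_prefixValue hodo⟩
end

section
/- Let {F_t} be the flow built under the function f with base odometer T as above (f(x) = K_{2^{N(x)+1}+x_{N(x)+1}}, K_n = 1!2!⋯n!). Then for every δ > 0, lim_{s→∞} μ(Δ_{F,δ,s}(X)) = 0, where Δ_{F,δ,s}(X) = {x ∈ X : ∃ t with e^{s−δ} < |t| < e^{s+δ}, F_t(x,0) ∈ X × {0}}. -/
/-
The return times of the flow to the base are the partial sums of `f` along odometer orbits.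
Since `K_{n+1} / K_n = (n + 1)!` grows so fast, a return time in `[K_n, K_{n+1})` with
`n = 2^(p+2) + c` forces the orbit segment to be a run of fewer than `(2^(p+2))!` odometer steps
that never carry past coordinate `p`, along which coordinate `p + 1` equals `c`. Apart from
countably many points, such `x` therefore lie in a cylinder of measure `2^-(p+2)`; and for large
`s` the window `(e^{s-δ}, e^{s+δ})` meets at most two consecutive intervals `[K_n, K_{n+1})`.
-/

open MeasureTheory Filter Set
open scoped ENNReal Classical

section Iterate

variable {α : Type*} {f g : α → α} {a : α}

lemma exists_iterate_eq_of_iterate_eq (hgf : ∀ x, x ≠ a → g (f x) = x) {x : α} {i : ℕ}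
    (h : f^[i] x = a) : ∃ j, g^[j] a = x := by
  induction i generalizing x with
  | zero => exact ⟨0, h.symm⟩
  | succ i ih =>
    obtain ⟨j, hj⟩ := ih h
    by_cases hx : x = a
    · exact ⟨0, hx.symm⟩
    · exact ⟨j + 1, by rw [Function.iterate_succ_apply', hj, hgf x hx]⟩

lemma countable_setOf_exists_iterate_eq (hgf : ∀ x, x ≠ a → g (f x) = x) :
    {x | ∃ i, f^[i] x = a}.Countable :=
  (Set.countable_range fun j => g^[j] a).mono fun _ ⟨_, h⟩ => exists_iterate_eq_of_iterate_eq hgf h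

lemma iterate_iterate_eq_iterate_sub (hfg : ∀ y, y ≠ a → f (g y) = y) {x : α} {k : ℕ}
    (hx : ∀ i < k, g^[i] x ≠ a) {j : ℕ} (hj : j ≤ k) : f^[j] (g^[k] x) = g^[k - j] x := by
  induction j with
  | zero => rfl
  | succ j ih =>
    rw [Function.iterate_succ_apply', ih (by omega), show k - j = k - (j + 1) + 1 by omega,
      Function.iterate_succ_apply', hfg _ (hx _ (by omega))]

end Iterate

section

open Finset Nat Topology

lemma Kfac_succ (n : ℕ) : Kfac (n + 1) = Kfac n * (n + 1)! := by
  rw [Kfac, Finset.prod_Icc_succ_top (by omega), ← Kfac]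

lemma Kfac_pos (n : ℕ) : 0 < Kfac n :=
  Finset.prod_pos fun i _ => Nat.factorial_pos i

lemma Kfac_mono : Monotone Kfac :=
  monotone_nat_of_le_succ fun n => by
    rw [Kfac_succ]; exact Nat.le_mul_of_pos_right _ (Nat.factorial_pos _)

lemma self_le_Kfac (n : ℕ) : n ≤ Kfac n := by
  cases n with
  | zero => exact Nat.zero_le _
  | succ n =>
    rw [Kfac_succ]
    exact (Nat.self_le_factorial _).trans (Nat.le_mul_of_pos_left _ (Kfac_pos n))

lemma exists_Kfac_le_lt {y : ℝ} (hy : 1 ≤ y) : ∃ n, (Kfac n : ℝ) ≤ y ∧ y < Kfac (n + 1) := by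
  have hex : ∃ n, y < Kfac (n + 1) := ⟨⌈y⌉₊, by
    calc y < ⌈y⌉₊ + 1 := (Nat.le_ceil y).trans_lt (lt_add_one _)
      _ ≤ Kfac (⌈y⌉₊ + 1) := by exact_mod_cast self_le_Kfac _⟩
  refine ⟨Nat.find hex, ?_, Nat.find_spec hex⟩
  rcases h : Nat.find hex with _ | m
  · simpa [Kfac] using hy
  · exact not_lt.1 (Nat.find_min hex (h ▸ Nat.lt_succ_self m))

def radix (j : ℕ) : ℕ := ∏ i ∈ range j, 2 ^ (i + 1)

lemma radix_succ (j : ℕ) : radix (j + 1) = radix j * 2 ^ (j + 1) := prod_range_succ _ _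

lemma radix_lt_factorial (p : ℕ) : radix (p + 1) < (2 ^ (p + 2))! := by
  induction p with
  | zero => decide
  | succ p ih =>
    set N := 2 ^ (p + 2)
    calc radix (p + 2) = radix (p + 1) * N := radix_succ _
      _ < N ! * N := Nat.mul_lt_mul_of_pos_right ih (by positivity)
      _ ≤ N ! * (N + 1) := Nat.mul_le_mul_left _ (Nat.le_succ N)
      _ = (N + 1)! := by rw [Nat.factorial_succ, mul_comm]
      _ ≤ (2 ^ (p + 3))! := Nat.factorial_le <| by
        simp only [N, pow_succ 2 (p + 2)]; have := @Nat.one_le_two_pow (p + 2); omega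

def maxPoint : OdoSpace := fun n => ⟨2 ^ (n + 1) - 1, Nat.sub_lt Nat.one_le_two_pow one_pos⟩

def zeroPoint : OdoSpace := fun _ => ⟨0, Nat.one_le_two_pow⟩

lemma exists_lt_of_ne_maxPoint {x : OdoSpace} (hx : x ≠ maxPoint) :
    ∃ n, (x n : ℕ) < 2 ^ (n + 1) - 1 := by
  contrapose! hx
  funext n
  have := (x n).isLt
  exact Fin.ext (by simp only [maxPoint]; have := hx n; omega)

lemma exists_pos_of_ne_zeroPoint {x : OdoSpace} (hx : x ≠ zeroPoint) : ∃ n, 0 < (x n : ℕ) := by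
  contrapose! hx
  funext n
  exact Fin.ext (Nat.le_zero.1 (hx n))

lemma odometer_maxPoint : odometer maxPoint = maxPoint := by
  rw [odometer, dif_neg (by simp [maxPoint])]

lemma Nfind_eq_find {x : OdoSpace} (h : ∃ n, (x n : ℕ) < 2 ^ (n + 1) - 1) :
    Nfind x = Nat.find h := dif_pos h

lemma coe_apply_of_lt_Nfind {x : OdoSpace} {j : ℕ} (hj : j < Nfind x) :
    (x j : ℕ) = 2 ^ (j + 1) - 1 := by
  by_cases h : ∃ n, (x n : ℕ) < 2 ^ (n + 1) - 1
  · have := Nat.find_min h (Nfind_eq_find h ▸ hj)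
    have := (x j).isLt
    omega
  · simp [Nfind, h] at hj

lemma odometer_apply {x : OdoSpace} (h : ∃ n, (x n : ℕ) < 2 ^ (n + 1) - 1) (j : ℕ) :
    (odometer x j : ℕ) =
      if j < Nfind x then 0 else if j = Nfind x then (x j : ℕ) + 1 else x j := by
  rw [odometer, dif_pos h, Nfind_eq_find h]
  split_ifs <;> rfl

lemma odometerInv_apply {x : OdoSpace} (h : ∃ n, 0 < (x n : ℕ)) (j : ℕ) :
    (odometerInv x j : ℕ) =
      if j < Nat.find h then 2 ^ (j + 1) - 1
      else if j = Nat.find h then (x j : ℕ) - 1 else x j := by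
  rw [odometerInv, dif_pos h]
  split_ifs <;> rfl

lemma odometer_apply_of_Nfind_lt {x : OdoSpace} (hx : x ≠ maxPoint) {j : ℕ} (hj : Nfind x < j) :
    odometer x j = x j :=
  Fin.ext <| by
    rw [odometer_apply (exists_lt_of_ne_maxPoint hx), if_neg (by omega), if_neg (by omega)]

lemma odometerInv_odometer {x : OdoSpace} (hx : x ≠ maxPoint) : odometerInv (odometer x) = x := by
  have h := exists_lt_of_ne_maxPoint hx
  have hpos : ∃ n, 0 < (odometer x n : ℕ) := ⟨Nfind x, by simp [odometer_apply h]⟩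
  have hfind : Nat.find hpos = Nfind x := (Nat.find_eq_iff hpos).2
    ⟨by simp [odometer_apply h], fun j hj => by simp [odometer_apply h, hj]⟩
  funext j
  apply Fin.ext
  rw [odometerInv_apply hpos, hfind, odometer_apply h]
  split_ifs with h1 h2 <;> first | omega | exact (coe_apply_of_lt_Nfind h1).symm

lemma odometer_odometerInv {x : OdoSpace} (hx : x ≠ zeroPoint) : odometer (odometerInv x) = x := by
  have h := exists_pos_of_ne_zeroPoint hx
  have hmin : ∀ j < Nat.find h, (x j : ℕ) = 0 := fun j hj => by
    have := Nat.find_min h hj; omega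
  have hspec := Nat.find_spec h
  have hlt := (x (Nat.find h)).isLt
  have hnm : ∃ n, (odometerInv x n : ℕ) < 2 ^ (n + 1) - 1 :=
    ⟨Nat.find h, by rw [odometerInv_apply h, if_neg (lt_irrefl _), if_pos rfl]; omega⟩
  have hfind : Nfind (odometerInv x) = Nat.find h := by
    rw [Nfind_eq_find hnm, Nat.find_eq_iff]
    refine ⟨by rw [odometerInv_apply h, if_neg (lt_irrefl _), if_pos rfl]; omega, fun j hj => ?_⟩
    rw [odometerInv_apply h, if_pos hj]
    omega
  funext j
  apply Fin.ext
  rw [odometer_apply hnm, hfind, odometerInv_apply h]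
  split_ifs with h1 h2 <;> first | exact (hmin j h1).symm | (subst h2; omega) | omega

/-- The first `m` coordinates of `x` as a mixed-radix numeral, which the odometer increments. -/
def digitValue (m : ℕ) (x : OdoSpace) : ℕ := ∑ j ∈ range m, (x j : ℕ) * radix j

lemma digitValue_succ (m : ℕ) (x : OdoSpace) :
    digitValue (m + 1) x = digitValue m x + (x m : ℕ) * radix m :=
  sum_range_succ _ _

lemma digitValue_lt_radix (m : ℕ) (x : OdoSpace) : digitValue m x < radix m := by
  induction m with
  | zero => simp [digitValue, radix]
  | succ m ih =>
    rw [digitValue_succ, radix_succ]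
    calc digitValue m x + (x m : ℕ) * radix m < ((x m : ℕ) + 1) * radix m := by linarith
      _ ≤ radix m * 2 ^ (m + 1) := by rw [mul_comm]; exact Nat.mul_le_mul_left _ (x m).isLt

lemma digitValue_add_one_of_forall_eq_max {m : ℕ} {x : OdoSpace}
    (hx : ∀ j < m, (x j : ℕ) = 2 ^ (j + 1) - 1) : digitValue m x + 1 = radix m := by
  induction m with
  | zero => simp [digitValue, radix]
  | succ m ih =>
    rw [digitValue_succ, radix_succ, hx m (lt_add_one m), Nat.sub_one_mul,
      mul_comm (2 ^ (m + 1))]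
    have := ih fun j hj => hx j (by omega)
    have := Nat.le_mul_of_pos_right (radix m) (Nat.two_pow_pos (m + 1))
    omega

lemma digitValue_of_forall_eq_zero {m : ℕ} {x : OdoSpace} (hx : ∀ j < m, (x j : ℕ) = 0) :
    digitValue m x = 0 :=
  sum_eq_zero fun j hj => by rw [hx j (mem_range.1 hj), zero_mul]

lemma digitValue_odometer {x : OdoSpace} (hx : x ≠ maxPoint) {m : ℕ} (hm : Nfind x < m) :
    digitValue m (odometer x) = digitValue m x + 1 := by
  have h := exists_lt_of_ne_maxPoint hx
  induction m, hm using Nat.le_induction with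
  | base =>
    have hzero : ∀ j < Nfind x, (odometer x j : ℕ) = 0 := fun j hj => by
      rw [odometer_apply h, if_pos hj]
    rw [digitValue_succ, digitValue_succ, digitValue_of_forall_eq_zero hzero, odometer_apply h,
      if_neg (lt_irrefl _), if_pos rfl,
      ← digitValue_add_one_of_forall_eq_max fun _ => coe_apply_of_lt_Nfind]
    ring
  | succ m hm ih =>
    rw [digitValue_succ, digitValue_succ, ih, odometer_apply_of_Nfind_lt hx (by omega)]
    ring

section OrbitSegment

variable {p k : ℕ} {x : OdoSpace}

lemma digitValue_odometer_iterate (hmax : ∀ i < k, odometer^[i] x ≠ maxPoint)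
    (hN : ∀ i < k, Nfind (odometer^[i] x) ≤ p) {i : ℕ} (hi : i ≤ k) :
    digitValue (p + 1) (odometer^[i] x) = digitValue (p + 1) x + i := by
  induction i with
  | zero => rfl
  | succ i ih =>
    rw [Function.iterate_succ_apply', digitValue_odometer (hmax i (by omega))
      (Nat.lt_succ_of_le (hN i (by omega))), ih (by omega), add_assoc]

lemma lt_radix_of_forall_Nfind_le (hmax : ∀ i < k, odometer^[i] x ≠ maxPoint)
    (hN : ∀ i < k, Nfind (odometer^[i] x) ≤ p) : k < radix (p + 1) := by
  have := digitValue_odometer_iterate hmax hN le_rfl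
  have := digitValue_lt_radix (p + 1) (odometer^[k] x)
  omega

lemma odometer_iterate_apply_of_forall_Nfind_le (hmax : ∀ i < k, odometer^[i] x ≠ maxPoint)
    (hN : ∀ i < k, Nfind (odometer^[i] x) ≤ p) {i : ℕ} (hi : i ≤ k) {j : ℕ} (hj : p < j) :
    odometer^[i] x j = x j := by
  induction i with
  | zero => rfl
  | succ i ih =>
    rw [Function.iterate_succ_apply', odometer_apply_of_Nfind_lt (hmax i (by omega))
      ((hN i (by omega)).trans_lt hj), ih (by omega)]

end OrbitSegment

lemma Kfac_le_ff_of_lt_Nfind {p : ℕ} {y : OdoSpace} (h : p < Nfind y) :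
    Kfac (2 ^ (p + 3)) ≤ ff y :=
  Kfac_mono <| (Nat.pow_le_pow_right two_pos (by omega)).trans (Nat.le_add_right _ _)

lemma ff_index_ne {p c : ℕ} {y : OdoSpace} (hN : Nfind y ≤ p) (hy : (y (p + 1) : ℕ) ≠ c) :
    2 ^ (Nfind y + 2) + (y (Nfind y + 1) : ℕ) ≠ 2 ^ (p + 2) + c := by
  rcases hN.lt_or_eq with hN | rfl
  · have h1 : (y (Nfind y + 1) : ℕ) < 2 ^ (Nfind y + 2) := (y _).isLt
    have h2 : 2 ^ (Nfind y + 2) * 2 ≤ 2 ^ (p + 2) := by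
      rw [← pow_succ]; exact Nat.pow_le_pow_right two_pos (by omega)
    omega
  · omega

/-- `forwardSum k x` is the `k`-th return time of `(x, 0)` to the base under the flow. -/
noncomputable def forwardSum (k : ℕ) (x : OdoSpace) : ℕ := ∑ i ∈ range k, ff (odometer^[i] x)

/-- If the segment avoids `maxPoint`, its steps never carry past coordinate `p` (one such step
alone costs `K_{2^(p+3)}`), so there are fewer than `(2^(p+2))!` of them; if coordinate `p + 1`
differed from `c`, each would cost at most `K_{n-1}` and their sum would stay below `K_n`. -/
lemma coord_eq_or_maxPoint_of_forwardSum_mem_Ico {p c k : ℕ} {x : OdoSpace}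
    (hc : c < 2 ^ (p + 2))
    (hS : forwardSum k x ∈ Set.Ico (Kfac (2 ^ (p + 2) + c)) (Kfac (2 ^ (p + 2) + c + 1))) :
    (∀ i ≤ k, (odometer^[i] x (p + 1) : ℕ) = c) ∨ ∃ i < k, odometer^[i] x = maxPoint := by
  obtain ⟨hlo, hhi⟩ := hS
  by_cases hmax : ∃ i < k, odometer^[i] x = maxPoint
  · exact Or.inr hmax
  push Not at hmax
  left
  have hterm : ∀ i < k, ff (odometer^[i] x) < Kfac (2 ^ (p + 2) + c + 1) := fun i hi =>
    (single_le_sum (fun _ _ => Nat.zero_le _) (mem_range.2 hi)).trans_lt hhi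
  have hN : ∀ i < k, Nfind (odometer^[i] x) ≤ p := fun i hi => by
    by_contra h
    have := Kfac_le_ff_of_lt_Nfind (not_le.1 h)
    have := Kfac_mono (show 2 ^ (p + 2) + c + 1 ≤ 2 ^ (p + 3) by rw [pow_succ 2 (p + 2)]; omega)
    have := hterm i hi
    omega
  have hcoord : ∀ i ≤ k, odometer^[i] x (p + 1) = x (p + 1) := fun i hi =>
    odometer_iterate_apply_of_forall_Nfind_le hmax hN hi (lt_add_one p)
  suffices hx : (x (p + 1) : ℕ) = c from fun i hi => by rw [hcoord i hi, hx]
  by_contra hx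
  obtain ⟨m, hm⟩ : ∃ m, 2 ^ (p + 2) + c = m + 1 := ⟨2 ^ (p + 2) + c - 1, by
    have := @Nat.one_le_two_pow (p + 2); omega⟩
  rw [hm] at hlo hterm
  have hsmall : ∀ i ∈ range k, ff (odometer^[i] x) ≤ Kfac m := fun i hi => by
    have hi := mem_range.1 hi
    have hne := ff_index_ne (hN i hi) (c := c) (by rwa [hcoord i hi.le])
    have := Kfac_mono.reflect_lt (hterm i hi)
    exact Kfac_mono (by omega)
  have hk : k < (m + 1)! := (lt_radix_of_forall_Nfind_le hmax hN).trans_le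
    ((radix_lt_factorial p).le.trans (Nat.factorial_le (by omega)))
  have : forwardSum k x < Kfac (m + 1) :=
    calc forwardSum k x ≤ k * Kfac m := by
          simpa [forwardSum] using sum_le_card_nsmul (range k) _ _ hsmall
      _ < (m + 1)! * Kfac m := Nat.mul_lt_mul_of_pos_right hk (Kfac_pos m)
      _ = Kfac (m + 1) := by rw [Kfac_succ, mul_comm]
  omega

/-- `backwardSum k x` is minus the `k`-th return time of `(x, 0)` to the base in negative time. -/
noncomputable def backwardSum (k : ℕ) (x : OdoSpace) : ℕ :=
  ∑ i ∈ range k, ff (odometerInv^[i + 1] x)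

lemma backwardSum_eq_forwardSum {k : ℕ} {x : OdoSpace}
    (hx : ∀ i < k, odometerInv^[i] x ≠ zeroPoint) :
    backwardSum k x = forwardSum k (odometerInv^[k] x) := by
  rw [forwardSum, ← sum_range_reflect]
  refine sum_congr rfl fun i hi => ?_
  have hi := mem_range.1 hi
  rw [iterate_iterate_eq_iterate_sub (fun _ => odometer_odometerInv) hx (by omega : k - 1 - i ≤ k),
    show k - (k - 1 - i) = i + 1 by omega]

def exceptionalSet : Set OdoSpace :=
  {x | ∃ i, odometer^[i] x = maxPoint} ∪ {x | ∃ i, odometerInv^[i] x = zeroPoint}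

lemma countable_exceptionalSet : exceptionalSet.Countable :=
  (countable_setOf_exists_iterate_eq fun _ => odometerInv_odometer).union
    (countable_setOf_exists_iterate_eq fun _ => odometer_odometerInv)

def forwardHits (n : ℕ) : Set OdoSpace :=
  {x | ∃ k, forwardSum k x ∈ Set.Ico (Kfac n) (Kfac (n + 1))}

def backwardHits (n : ℕ) : Set OdoSpace :=
  {x | ∃ k, backwardSum k x ∈ Set.Ico (Kfac n) (Kfac (n + 1))}

section Hits

variable {p c : ℕ}

lemma forwardHits_subset (hc : c < 2 ^ (p + 2)) :
    forwardHits (2 ^ (p + 2) + c) ⊆ {x | (x (p + 1) : ℕ) = c} ∪ exceptionalSet := by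
  rintro x ⟨k, hk⟩
  rcases coord_eq_or_maxPoint_of_forwardSum_mem_Ico hc hk with hx | ⟨i, -, hi⟩
  · exact Or.inl (hx 0 (Nat.zero_le k))
  · exact Or.inr (Or.inl ⟨i, hi⟩)

/-- Going backwards from `x` is going forwards from `odometerInv^[k] x`, which reaches `x`
after `k` steps; only `zeroPoint` blocks this. -/
lemma backwardHits_subset (hc : c < 2 ^ (p + 2)) :
    backwardHits (2 ^ (p + 2) + c) ⊆ {x | (x (p + 1) : ℕ) = c} ∪ exceptionalSet := by
  rintro x ⟨k, hk⟩
  by_cases hzero : ∃ i < k, odometerInv^[i] x = zeroPoint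
  · obtain ⟨i, -, hi⟩ := hzero
    exact Or.inr (Or.inr ⟨i, hi⟩)
  push Not at hzero
  have hback : odometer^[k] (odometerInv^[k] x) = x := by
    simpa using iterate_iterate_eq_iterate_sub (fun _ => odometer_odometerInv) hzero le_rfl
  rw [backwardSum_eq_forwardSum hzero] at hk
  rcases coord_eq_or_maxPoint_of_forwardSum_mem_Ico hc hk with hx | ⟨i, hik, hi⟩
  · exact Or.inl (hback ▸ hx k le_rfl)
  · have hx := congrArg odometer^[k - i] hi
    rw [← Function.iterate_add_apply, Nat.sub_add_cancel hik.le, hback,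
      Function.iterate_fixed odometer_maxPoint] at hx
    exact Or.inr (Or.inl ⟨0, hx⟩)

end Hits

section Measure

def IsUniformOnCylinders (μ : Measure OdoSpace) : Prop :=
  ∀ (k : ℕ) (a : (n : Fin k) → Fin (2 ^ ((n : ℕ) + 1))),
    μ {x : OdoSpace | ∀ n : Fin k, x (n : ℕ) = a n} = ∏ n : Fin k, ((2 : ℝ≥0∞) ^ ((n : ℕ) + 1))⁻¹

lemma tendsto_inv_two_pow : Tendsto (fun m : ℕ => ((2 : ℝ≥0∞) ^ m)⁻¹) atTop (𝓝 0) := by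
  simpa only [ENNReal.inv_pow] using ENNReal.tendsto_pow_atTop_nhds_zero_of_lt_one (by norm_num)

variable {μ : Measure OdoSpace}

lemma measure_coord_eq_le (hμ : IsUniformOnCylinders μ) (m c : ℕ) :
    μ {x | (x m : ℕ) = c} ≤ ((2 : ℝ≥0∞) ^ (m + 1))⁻¹ := by
  rcases lt_or_ge c (2 ^ (m + 1)) with hc | hc
  swap
  · rw [show {x : OdoSpace | (x m : ℕ) = c} = ∅ from
      Set.eq_empty_of_forall_notMem fun x hx => (x m).isLt.not_ge (hx ▸ hc), measure_empty]
    exact zero_le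
  set w : Fin (m + 1) → ℝ≥0∞ := fun j => (2 : ℝ≥0∞) ^ ((j : ℕ) + 1)
  let cyl (a : (n : Fin (m + 1)) → Fin (2 ^ ((n : ℕ) + 1))) : Set OdoSpace :=
    {x | ∀ n : Fin (m + 1), x (n : ℕ) = a n}
  let S : Finset ((n : Fin (m + 1)) → Fin (2 ^ ((n : ℕ) + 1))) :=
    {a ∈ Fintype.piFinset fun _ => univ | a (Fin.last m) = (⟨c, hc⟩ : Fin (2 ^ (m + 1)))}
  have hcover : {x : OdoSpace | (x m : ℕ) = c} ⊆ ⋃ a ∈ S, cyl a := fun y hy =>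
    Set.mem_biUnion (t := cyl) (x := fun n => y n) (by simpa [S, Fin.ext_iff] using hy) fun _ => rfl
  have hcard : (#S : ℝ≥0∞) = ∏ j ∈ univ.erase (Fin.last m), w j := by
    have := Fintype.card_filter_piFinset_eq_of_mem
      (fun j : Fin (m + 1) => (univ : Finset (Fin (2 ^ ((j : ℕ) + 1))))) (Fin.last m)
      (Finset.mem_univ (⟨c, hc⟩ : Fin (2 ^ (m + 1))))
    rw [show #S = _ from this]
    simp [w]
  calc μ {x | (x m : ℕ) = c} ≤ ∑ a ∈ S, μ (cyl a) := (measure_mono hcover).trans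
        (measure_biUnion_finset_le _ _)
    _ = #S * ∏ j, (w j)⁻¹ := by rw [sum_congr rfl fun a _ => hμ (m + 1) a, sum_const, nsmul_eq_mul]
    _ = (w (Fin.last m))⁻¹ := by
      rw [hcard, ← mul_prod_erase univ _ (Finset.mem_univ (Fin.last m)), mul_left_comm,
        ← prod_mul_distrib, prod_eq_one fun j _ => ENNReal.mul_inv_cancel (by positivity)
          (ENNReal.pow_ne_top ENNReal.ofNat_ne_top), mul_one]
    _ = ((2 : ℝ≥0∞) ^ (m + 1))⁻¹ := rfl

lemma measure_exceptionalSet (hμ : IsUniformOnCylinders μ) : μ exceptionalSet = 0 := by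
  have hlim := tendsto_inv_two_pow.comp (tendsto_add_atTop_nat 1)
  have : NullSingletonClass μ := ⟨fun y => le_antisymm (ge_of_tendsto' hlim fun m =>
    (measure_mono fun x hx => congrArg (fun z : OdoSpace => (z m : ℕ)) hx).trans
      (measure_coord_eq_le hμ m (y m))) zero_le⟩
  exact countable_exceptionalSet.measure_zero μ

lemma measure_hits_le (hμ : IsUniformOnCylinders μ) {p c : ℕ} (hc : c < 2 ^ (p + 2)) :
    μ (forwardHits (2 ^ (p + 2) + c) ∪ backwardHits (2 ^ (p + 2) + c)) ≤
      ((2 : ℝ≥0∞) ^ (p + 2))⁻¹ :=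
  calc _ ≤ μ ({x | (x (p + 1) : ℕ) = c} ∪ exceptionalSet) :=
        measure_mono (Set.union_subset (forwardHits_subset hc) (backwardHits_subset hc))
    _ ≤ μ {x | (x (p + 1) : ℕ) = c} + μ exceptionalSet := measure_union_le _ _
    _ = μ {x | (x (p + 1) : ℕ) = c} := by rw [measure_exceptionalSet hμ, add_zero]
    _ ≤ _ := measure_coord_eq_le hμ (p + 1) c

lemma tendsto_measure_hits (hμ : IsUniformOnCylinders μ) :
    Tendsto (fun n => μ (forwardHits n ∪ backwardHits n)) atTop (𝓝 0) := by
  have hlog : Tendsto (Nat.log 2) atTop atTop :=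
    tendsto_atTop_atTop.2 fun b => ⟨2 ^ b, fun n hn => Nat.le_log_of_pow_le one_lt_two hn⟩
  refine tendsto_of_tendsto_of_tendsto_of_le_of_le' tendsto_const_nhds
    (tendsto_inv_two_pow.comp hlog) (Eventually.of_forall fun _ => zero_le) ?_
  filter_upwards [eventually_ge_atTop 4] with n hn
  have hlog2 : 2 ≤ Nat.log 2 n := Nat.le_log_of_pow_le one_lt_two hn
  obtain ⟨p, hp⟩ : ∃ p, Nat.log 2 n = p + 2 := ⟨_, (Nat.sub_add_cancel hlog2).symm⟩
  have hlo := Nat.pow_log_le_self 2 (by omega : n ≠ 0)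
  have hhi := Nat.lt_pow_succ_log_self one_lt_two n
  simp only [Function.comp_apply, hp] at hlo hhi ⊢
  rw [Nat.succ_eq_add_one, pow_succ] at hhi
  obtain ⟨c, rfl⟩ := Nat.exists_eq_add_of_le hlo
  exact measure_hits_le hμ (by omega)

end Measure

/-- Since `K_{n+2} / K_{n+1} = (n + 2)!` eventually exceeds `e^{2δ}`, the window
`(e^{s-δ}, e^{s+δ})` meets at most two of the intervals `[K_n, K_{n+1})`. -/
lemma eventually_Ioo_exp_subset_Ico_Kfac (δ : ℝ) (N : ℕ) : ∀ᶠ s in atTop, ∃ n₀, N ≤ n₀ ∧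
    Set.Ioo (Real.exp (s - δ)) (Real.exp (s + δ)) ⊆ Set.Ico (Kfac n₀ : ℝ) (Kfac (n₀ + 2)) := by
  obtain ⟨M, hM⟩ := exists_nat_ge (Real.exp (2 * δ))
  filter_upwards [eventually_ge_atTop (δ + Real.log (Kfac (max M N)))] with s hs
  have hK : (Kfac (max M N) : ℝ) ≤ Real.exp (s - δ) := by
    rw [← Real.exp_log (by exact_mod_cast Kfac_pos _ : (0 : ℝ) < Kfac (max M N))]
    exact Real.exp_le_exp.2 (by linarith)
  have h1 : (1 : ℝ) ≤ Kfac (max M N) := by exact_mod_cast Kfac_pos _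
  obtain ⟨n₀, hlo, hhi⟩ := exists_Kfac_le_lt (h1.trans hK)
  have hn₀ : max M N ≤ n₀ :=
    Nat.lt_succ_iff.1 (Kfac_mono.reflect_lt (by exact_mod_cast hK.trans_lt hhi))
  refine ⟨n₀, le_of_max_le_right hn₀, fun y ⟨hy, hy'⟩ => ⟨hlo.trans hy.le, ?_⟩⟩
  have hfac : Real.exp (2 * δ) ≤ ((n₀ + 2)! : ℝ) :=
    hM.trans (by exact_mod_cast (le_of_max_le_left hn₀).trans ((Nat.le_add_right _ 2).trans
      (Nat.self_le_factorial _)))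
  calc y < Real.exp (s + δ) := hy'
    _ = Real.exp (s - δ) * Real.exp (2 * δ) := by rw [← Real.exp_add]; ring_nf
    _ < Kfac (n₀ + 1) * ((n₀ + 2)! : ℝ) := mul_lt_mul hhi hfac (Real.exp_pos _) (by positivity)
    _ = Kfac (n₀ + 2) := by rw [Kfac_succ (n₀ + 1)]; push_cast; rfl

lemma setOf_return_subset_hits {F : ℝ → OdoSpace × ℝ → OdoSpace × ℝ}
    (hpos : ∀ t : ℝ, 0 < t → ∀ x, (F t (x, 0)).2 = 0 → ∃ k, t = forwardSum k x)
    (hneg : ∀ t : ℝ, t < 0 → ∀ x, (F t (x, 0)).2 = 0 → ∃ k, -t = backwardSum k x)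
    {a b : ℝ} {n : ℕ} (ha : 0 ≤ a) (hab : Set.Ioo a b ⊆ Set.Ico (Kfac n : ℝ) (Kfac (n + 2))) :
    {x | ∃ t : ℝ, a < |t| ∧ |t| < b ∧ (F t (x, 0)).2 = 0} ⊆
      (forwardHits n ∪ backwardHits n) ∪ (forwardHits (n + 1) ∪ backwardHits (n + 1)) := by
  rintro x ⟨t, ht, ht', hF⟩
  have hsplit : ∀ S : ℕ, (S : ℝ) = |t| →
      S ∈ Set.Ico (Kfac n) (Kfac (n + 1)) ∨ S ∈ Set.Ico (Kfac (n + 1)) (Kfac (n + 2)) := by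
    intro S hS
    obtain ⟨hlo, hhi⟩ := hab (show (S : ℝ) ∈ Set.Ioo a b from hS ▸ ⟨ht, ht'⟩)
    have hS : S ∈ Set.Ico (Kfac n) (Kfac (n + 2)) := ⟨by exact_mod_cast hlo, by exact_mod_cast hhi⟩
    rwa [← Set.Ico_union_Ico_eq_Ico (Kfac_mono n.le_succ) (Kfac_mono (n + 1).le_succ)] at hS
  rcases lt_trichotomy t 0 with htneg | rfl | htpos
  · obtain ⟨k, hk⟩ := hneg t htneg x hF
    rcases hsplit _ (by rw [abs_of_neg htneg, hk]) with h | h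
    exacts [Or.inl (Or.inr ⟨k, h⟩), Or.inr (Or.inr ⟨k, h⟩)]
  · exact absurd ht (by simpa using ha)
  · obtain ⟨k, hk⟩ := hpos t htpos x hF
    rcases hsplit _ (by rw [abs_of_pos htpos, hk]) with h | h
    exacts [Or.inl (Or.inl ⟨k, h⟩), Or.inr (Or.inl ⟨k, h⟩)]

end

theorem stmt_13_general (μ : Measure OdoSpace)
    (hμ : ∀ (k : ℕ) (a : (n : Fin k) → Fin (2 ^ ((n : ℕ) + 1))),
      μ {x : OdoSpace | ∀ n : Fin k, x (n : ℕ) = a n} =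
        ∏ n : Fin k, ((2 : ℝ≥0∞) ^ ((n : ℕ) + 1))⁻¹)
    -- `F` is the flow built under `f` with base `odometer`: return-time characterization
    (F : ℝ → OdoSpace × ℝ → OdoSpace × ℝ)
    (hpos : ∀ t : ℝ, 0 < t → ∀ x : OdoSpace,
      ((F t (x, 0)).2 = 0 ↔
        ∃ k : ℕ, 1 ≤ k ∧ t = ∑ i ∈ Finset.range k, (ff (odometer^[i] x) : ℝ)))
    (hneg : ∀ t : ℝ, t < 0 → ∀ x : OdoSpace,
      ((F t (x, 0)).2 = 0 ↔
        ∃ k : ℕ, 1 ≤ k ∧ t = -∑ i ∈ Finset.range k, (ff (odometerInv^[i + 1] x) : ℝ))) :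
    ∀ δ : ℝ, 0 < δ →
      Tendsto (fun s : ℝ => μ {x : OdoSpace | ∃ t : ℝ,
          Real.exp (s - δ) < |t| ∧ |t| < Real.exp (s + δ) ∧ (F t (x, 0)).2 = 0})
        atTop (nhds 0) := by
  intro δ _
  refine ENNReal.tendsto_nhds_zero.2 fun ε hε => ?_
  obtain ⟨N, hN⟩ := eventually_atTop.1
    (ENNReal.tendsto_nhds_zero.1 (tendsto_measure_hits hμ) (ε / 2) (by simpa using hε.ne'))
  filter_upwards [eventually_Ioo_exp_subset_Ico_Kfac δ N] with s ⟨n₀, hn₀, hwin⟩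
  have hsub := setOf_return_subset_hits (F := F)
    (fun t ht x hF => let ⟨k, _, hk⟩ := (hpos t ht x).1 hF
      ⟨k, by rw [hk, forwardSum, Nat.cast_sum]⟩)
    (fun t ht x hF => let ⟨k, _, hk⟩ := (hneg t ht x).1 hF
      ⟨k, by rw [hk, neg_neg, backwardSum, Nat.cast_sum]⟩)
    (Real.exp_pos (s - δ)).le hwin
  calc _ ≤ μ (forwardHits n₀ ∪ backwardHits n₀) +
        μ (forwardHits (n₀ + 1) ∪ backwardHits (n₀ + 1)) :=
      (measure_mono hsub).trans (measure_union_le _ _)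
    _ ≤ ε / 2 + ε / 2 := add_le_add (hN _ hn₀) (hN _ (by omega))
    _ = ε := ENNReal.add_halves ε

theorem stmt_13 (μ : Measure OdoSpace) [IsProbabilityMeasure μ]
    (hμ : ∀ (k : ℕ) (a : (n : Fin k) → Fin (2 ^ ((n : ℕ) + 1))),
      μ {x : OdoSpace | ∀ n : Fin k, x (n : ℕ) = a n} =
        ∏ n : Fin k, ((2 : ℝ≥0∞) ^ ((n : ℕ) + 1))⁻¹)
    -- `F` is the flow built under `f` with base `odometer`: return-time characterization
    (F : ℝ → OdoSpace × ℝ → OdoSpace × ℝ)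
    (hpos : ∀ t : ℝ, 0 < t → ∀ x : OdoSpace,
      ((F t (x, 0)).2 = 0 ↔
        ∃ k : ℕ, 1 ≤ k ∧ t = ∑ i ∈ Finset.range k, (ff (odometer^[i] x) : ℝ)))
    (hneg : ∀ t : ℝ, t < 0 → ∀ x : OdoSpace,
      ((F t (x, 0)).2 = 0 ↔
        ∃ k : ℕ, 1 ≤ k ∧ t = -∑ i ∈ Finset.range k, (ff (odometerInv^[i + 1] x) : ℝ))) :
    ∀ δ : ℝ, 0 < δ →
      Tendsto (fun s : ℝ => μ {x : OdoSpace | ∃ t : ℝ,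
          Real.exp (s - δ) < |t| ∧ |t| < Real.exp (s + δ) ∧ (F t (x, 0)).2 = 0})
        atTop (nhds 0) :=
  stmt_13_general μ hμ F hpos hneg
end
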